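/- The optimized unraveling U_opt is sound for every U_opt-LL 3-eDCTRS that is non-LV or non-RV: if R is a 3-eDCTRS over a signature F that is ultra-left-linear w.r.t. U_opt and is non-LV or non-RV, then for all terms s, t ∈ T(F,V), s →*_{U_opt(R)} t implies s →*_R t. -/

import Mathlib

set_option maxHeartbeats 1000000

universe u

/-! ## Terms -/

inductive Term (α : Type u) : Type u where
  | var : ℕ → Term α
  | app : α → List (Term α) → Term α

namespace Term

variable {α : Type u}

/-- The list of variable occurrences of a term (left-to-right). -/
def varList : Term α → List ℕ
  | var x => [x]
  | app _ ts => ts.attach.foldr (fun t acc => varList t.1 ++ acc) []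
decreasing_by
  simp only [Term.app.sizeOf_spec]
  have := List.sizeOf_lt_of_mem t.2
  omega

/-- The list of (function symbol, number of arguments) occurrences of a term. -/
def apps : Term α → List (α × ℕ)
  | var _ => []
  | app f ts => (f, ts.length) :: ts.attach.foldr (fun t acc => apps t.1 ++ acc) []
decreasing_by
  simp only [Term.app.sizeOf_spec]
  have := List.sizeOf_lt_of_mem t.2
  omega

/-- `Var(t)`: the set of variables of a term. -/
def varFinset (t : Term α) : Finset ℕ := t.varList.toFinset

/-- All function symbols of the term belong to the signature `F`. -/
def overSig (F : Set α) (t : Term α) : Prop := ∀ p ∈ t.apps, p.1 ∈ F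

/-- `t ∈ T(F,V)`: all function symbols belong to `F` and are applied
according to their arities. -/
def inT (F : Set α) (ar : α → ℕ) (t : Term α) : Prop :=
  ∀ p ∈ t.apps, p.1 ∈ F ∧ ar p.1 = p.2

/-- A term is linear if no variable occurs twice in it. -/
def Linear (t : Term α) : Prop := t.varList.Nodup

/-- A term is ground if it contains no variable. -/
def Ground (t : Term α) : Prop := t.varList = []

/-- Applying a substitution to a term. -/
def subst (σ : ℕ → Term α) : Term α → Term α
  | var x => σ x
  | app f ts => app f (ts.attach.map (fun t => subst σ t.1))
decreasing_by
  simp only [Term.app.sizeOf_spec]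
  have := List.sizeOf_lt_of_mem t.2
  omega

def isVar : Term α → Prop
  | var _ => True
  | app _ _ => False

def root? : Term α → Option α
  | var _ => none
  | app f _ => some f

def args : Term α → List (Term α)
  | var _ => []
  | app _ ts => ts

end Term

def junkPair {α : Type u} : Term α × Term α := (Term.var 0, Term.var 0)

/-! ## Conditional rewrite rules -/

/-- An extended (oriented) conditional rewrite rule `l → r ⇐ s₁ ↠ t₁; …; s_k ↠ t_k`,
where `conds` is the list of pairs `(sᵢ, tᵢ)`. -/
structure ERule (α : Type u) : Type u where
  lhs : Term α
  rhs : Term α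
  conds : List (Term α × Term α)

namespace ERule

variable {α : Type u}

def nonLV (ρ : ERule α) : Prop := ¬ ρ.lhs.isVar
def nonRV (ρ : ERule α) : Prop := ¬ ρ.rhs.isVar

/-- `X_{j+1} = Var(l, t_1, …, t_j)` (0-based index `j`). -/
def Xset (ρ : ERule α) (j : ℕ) : Finset ℕ :=
  ρ.lhs.varFinset ∪ ((ρ.conds.take j).map (fun c => c.2.varFinset)).foldr (· ∪ ·) ∅

/-- `Y_{j+1} = Var(r, t_{j+1}, s_{j+2}, t_{j+2}, …, s_k, t_k)` (0-based index `j`). -/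
def Yset (ρ : ERule α) (j : ℕ) : Finset ℕ :=
  ρ.rhs.varFinset ∪ (ρ.conds.getD j junkPair).2.varFinset ∪
    ((ρ.conds.drop (j+1)).map (fun c => c.1.varFinset ∪ c.2.varFinset)).foldr (· ∪ ·) ∅

/-- `Z_i = X_i ∩ Y_i`. -/
def Zset (ρ : ERule α) (j : ℕ) : Finset ℕ := ρ.Xset j ∩ ρ.Yset j

/-- Determinism: `Var(sᵢ) ⊆ Var(l, t₁, …, t_{i-1})`. -/
def Det (ρ : ERule α) : Prop :=
  ∀ j < ρ.conds.length, (ρ.conds.getD j junkPair).1.varFinset ⊆ ρ.Xset j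

/-- Type 3: `Var(r) ⊆ Var(l, s₁, t₁, …, s_k, t_k)`. -/
def Type3 (ρ : ERule α) : Prop :=
  ρ.rhs.varFinset ⊆
    ρ.lhs.varFinset ∪ ((ρ.conds.map (fun c => c.1.varFinset ∪ c.2.varFinset)).foldr (· ∪ ·) ∅)

/-- Left-linearity of a rule. -/
def LL (ρ : ERule α) : Prop := ρ.lhs.Linear
/-- Right-linearity of a rule. -/
def RL (ρ : ERule α) : Prop := ρ.rhs.Linear
/-- Non-erasingness of a rule: `Var(l) ⊆ Var(r)`. -/
def NE (ρ : ERule α) : Prop := ρ.lhs.varFinset ⊆ ρ.rhs.varFinset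

/-- `EVar(l → r) = Var(r) \\ Var(l)`, the extra variables of a rule. -/
def extraVars (ρ : ERule α) : Finset ℕ := ρ.rhs.varFinset \ ρ.lhs.varFinset

/-- The inverted rule `(l → r ⇐ s₁ ↠ t₁; …; s_k ↠ t_k)⁻¹ = r → l ⇐ t_k ↠ s_k; …; t₁ ↠ s₁`. -/
def inv (ρ : ERule α) : ERule α :=
  ⟨ρ.rhs, ρ.lhs, (ρ.conds.map (fun c => (c.2, c.1))).reverse⟩

def allVarFinset (ρ : ERule α) : Finset ℕ :=
  ρ.lhs.varFinset ∪ ρ.rhs.varFinset ∪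
    ((ρ.conds.map (fun c => c.1.varFinset ∪ c.2.varFinset)).foldr (· ∪ ·) ∅)

/-- A number strictly larger than every variable of the rule; used to pick fresh variables. -/
def freshBase (ρ : ERule α) : ℕ := ρ.allVarFinset.sup id + 1

/-- All terms of the rule use only symbols of `F`. -/
def overSig (F : Set α) (ρ : ERule α) : Prop :=
  ρ.lhs.overSig F ∧ ρ.rhs.overSig F ∧ ∀ c ∈ ρ.conds, c.1.overSig F ∧ c.2.overSig F

/-- All terms of the rule are in `T(F,V)` (symbols of `F`, arity-correct). -/
def inT (F : Set α) (ar : α → ℕ) (ρ : ERule α) : Prop :=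
  ρ.lhs.inT F ar ∧ ρ.rhs.inT F ar ∧ ∀ c ∈ ρ.conds, c.1.inT F ar ∧ c.2.inT F ar

end ERule

/-! ## Reduction relations -/

/-- One-hole contexts. -/
inductive Ctx (α : Type u) : Type u where
  | hole : Ctx α
  | app : α → List (Term α) → Ctx α → List (Term α) → Ctx α

def Ctx.plug {α : Type u} : Ctx α → Term α → Term α
  | .hole, t => t
  | .app f pre c post, t => .app f (pre ++ c.plug t :: post)

/-- The approximations `→_{(n),R}` of the reduction relation of an oriented eCTRS. -/
def RedN {α : Type u} (R : Set (ERule α)) : ℕ → Term α → Term α → Prop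
  | 0 => fun _ _ => False
  | n + 1 => fun s t =>
      RedN R n s t ∨
      ∃ ρ ∈ R, ∃ C : Ctx α, ∃ σ : ℕ → Term α,
        s = C.plug (ρ.lhs.subst σ) ∧ t = C.plug (ρ.rhs.subst σ) ∧
        ∀ c ∈ ρ.conds, Relation.ReflTransGen (RedN R n) (c.1.subst σ) (c.2.subst σ)

/-- The reduction relation `→_R` of an oriented eCTRS. -/
def Red {α : Type u} (R : Set (ERule α)) (s t : Term α) : Prop := ∃ n, RedN R n s t

/-- `→*_R`. -/
def RedStar {α : Type u} (R : Set (ERule α)) : Term α → Term α → Prop :=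
  Relation.ReflTransGen (Red R)

/-- The approximations of the reduction relation of a join CTRS
(conditions interpreted as joinability). -/
def JRedN {α : Type u} (R : Set (ERule α)) : ℕ → Term α → Term α → Prop
  | 0 => fun _ _ => False
  | n + 1 => fun s t =>
      JRedN R n s t ∨
      ∃ ρ ∈ R, ∃ C : Ctx α, ∃ σ : ℕ → Term α,
        s = C.plug (ρ.lhs.subst σ) ∧ t = C.plug (ρ.rhs.subst σ) ∧
        ∀ c ∈ ρ.conds, ∃ w, Relation.ReflTransGen (JRedN R n) (c.1.subst σ) w ∧
          Relation.ReflTransGen (JRedN R n) (c.2.subst σ) w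

/-- The reduction relation of a join CTRS. -/
def JRed {α : Type u} (R : Set (ERule α)) (s t : Term α) : Prop := ∃ n, JRedN R n s t

def JRedStar {α : Type u} (R : Set (ERule α)) : Term α → Term α → Prop :=
  Relation.ReflTransGen (JRed R)

/-- The underlying unconditional system `R_u`. -/
def Ru {α : Type u} (R : Set (ERule α)) : Set (ERule α) :=
  (fun ρ : ERule α => ⟨ρ.lhs, ρ.rhs, []⟩) '' R

/-- Normal form w.r.t. a system. -/
def IsNF {α : Type u} (R : Set (ERule α)) (t : Term α) : Prop := ∀ w, ¬ Red R t w

/-! ## Unravelings for deterministic CTRSs -/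

/-- The fixed-order sequence of a finite set of variables. -/
def seqOf (s : Finset ℕ) : List ℕ := s.sort (· ≤ ·)

/-- `U(t, x⃗)`: a U symbol applied to a term followed by a sequence of variables. -/
def mkU {α : Type u} (f : α) (t : Term α) (xs : List ℕ) : Term α :=
  .app f (t :: xs.map Term.var)

/-- Generic sequential unraveling of a single deterministic rule, where `carry j` is
the variable sequence carried by the `j`-th U symbol. -/
def unravelWith {α : Type u} (carry : ℕ → List ℕ) (u : ℕ → α) (ρ : ERule α) :
    List (ERule α) :=
  (List.range (ρ.conds.length + 1)).map (fun j =>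
    ⟨ if j = 0 then ρ.lhs else mkU (u (j-1)) (ρ.conds.getD (j-1) junkPair).2 (carry (j-1)),
      if j < ρ.conds.length then mkU (u j) (ρ.conds.getD j junkPair).1 (carry j) else ρ.rhs,
      [] ⟩)

/-- Ohlebusch's unraveling `U` of a single rule (carrying `X⃗ᵢ`). -/
def unravelU {α : Type u} (u : ℕ → α) (ρ : ERule α) : List (ERule α) :=
  unravelWith (fun j => seqOf (ρ.Xset j)) u ρ

/-- The optimized unraveling `U_opt` of a single rule (carrying `Z⃗ᵢ`). -/
def unravelOpt {α : Type u} (u : ℕ → α) (ρ : ERule α) : List (ERule α) :=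
  unravelWith (fun j => seqOf (ρ.Zset j)) u ρ

/-- `U(R)`. -/
def USys {α : Type u} (u : ERule α → ℕ → α) (R : Set (ERule α)) : Set (ERule α) :=
  { q | ∃ ρ ∈ R, q ∈ unravelU (u ρ) ρ }

/-- `U_opt(R)`. -/
def UoptSys {α : Type u} (u : ERule α → ℕ → α) (R : Set (ERule α)) : Set (ERule α) :=
  { q | ∃ ρ ∈ R, q ∈ unravelOpt (u ρ) ρ }

/-- The U symbols introduced for the rules of `R`. -/
def USymbols {α : Type u} (u : ERule α → ℕ → α) (R : Set (ERule α)) : Set α :=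
  { a | ∃ ρ ∈ R, ∃ i < ρ.conds.length, a = u ρ i }

/-- Freshness of the U symbols: they do not occur in `F` and are pairwise distinct. -/
def UFresh {α : Type u} (F : Set α) (u : ERule α → ℕ → α) (R : Set (ERule α)) : Prop :=
  (∀ ρ ∈ R, ∀ i < ρ.conds.length, u ρ i ∉ F) ∧
  (∀ ρ ∈ R, ∀ ρ' ∈ R, ∀ i < ρ.conds.length, ∀ j < ρ'.conds.length,
      u ρ i = u ρ' j → ρ = ρ' ∧ i = j)

/-! ## Positions, parallel reduction, EV-safe reduction -/

abbrev Pos := List ℕ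

/-- Subterm at a position. -/
def Term.sub? {α : Type u} : Pos → Term α → Option (Term α)
  | [], t => some t
  | _ :: _, .var _ => none
  | i :: p, .app _ ts => (ts[i]?).bind (Term.sub? p)

/-- Replacing the subterm at a position by `w`. -/
def Term.replaceAt {α : Type u} (w : Term α) : Pos → Term α → Term α
  | [], _ => w
  | _ :: _, .var x => .var x
  | i :: p, .app f ts =>
      .app f (ts.mapIdx (fun j s => if j = i then Term.replaceAt w p s else s))

/-- `Pos_F(t)`: non-variable positions of `t`. -/
def PosF {α : Type u} (t : Term α) : Set Pos :=
  { p | ∃ f ts, Term.sub? p t = some (Term.app f ts) }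

/-- `Pos_V(t)`: variable positions of `t`. -/
def PosV {α : Type u} (t : Term α) : Set Pos :=
  { p | ∃ x, Term.sub? p t = some (Term.var x) }

/-- One rewrite step of an eTRS at position `p`. -/
def RedAt {α : Type u} (R : Set (ERule α)) (p : Pos) (s t : Term α) : Prop :=
  ∃ ρ ∈ R, ρ.conds = [] ∧ ∃ σ : ℕ → Term α,
    Term.sub? p s = some (ρ.lhs.subst σ) ∧ t = Term.replaceAt (ρ.rhs.subst σ) p s

/-- Two positions are parallel. -/
def ParallelPos (p q : Pos) : Prop := ¬ p <+: q ∧ ¬ q <+: p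

/-- A sequence of single steps at the listed positions. -/
inductive RedSeqAt {α : Type u} (R : Set (ERule α)) : List Pos → Term α → Term α → Prop
  | nil (t : Term α) : RedSeqAt R [] t t
  | cons {ps s s' t} (p : Pos) : RedAt R p s s' → RedSeqAt R ps s' t →
      RedSeqAt R (p :: ps) s t

/-- One parallel rewrite step contracting the (pairwise parallel) positions in `P`. -/
def ParStep {α : Type u} (R : Set (ERule α)) (P : List Pos) (s t : Term α) : Prop :=
  P.Pairwise ParallelPos ∧ RedSeqAt R P s t

/-- The parallel reduction `⇉_R`. -/
def ParRed {α : Type u} (R : Set (ERule α)) (s t : Term α) : Prop :=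
  ∃ P, ParStep R P s t

/-- Parallel reduction where every contracted position is at or below a position of `Q`. -/
def ParRedBelow {α : Type u} (R : Set (ERule α)) (Q : Set Pos) (s t : Term α) : Prop :=
  ∃ P, ParStep R P s t ∧ ∀ p ∈ P, ∃ q ∈ Q, q <+: p

/-- `n`-fold composition of a relation. -/
def NFold {β : Type*} (r : β → β → Prop) : ℕ → β → β → Prop
  | 0 => Eq
  | n + 1 => fun a c => ∃ b, r a b ∧ NFold r n b c

/-- The update of the set of basic positions w.r.t. extra variables after a rewrite step
at position `p` with rule `l → r`. -/
def nextB {α : Type u} (B : Set Pos) (p : Pos) (l r : Term α) : Set Pos :=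
  { q | q ∈ B ∧ ¬ p <+: q }
  ∪ { q | ∃ q' ∈ PosF r, q = p ++ q' }
  ∪ { q | ∃ pv p' q', pv ∈ PosV l ∧ Term.sub? pv l = Term.sub? p' r ∧
        (p ++ pv ++ q') ∈ B ∧ q = p ++ p' ++ q' }

/-- Reduction sequences of an eTRS based on a set `B` of positions w.r.t. extra
variables, where additionally every term substituted for an extra variable of the
applied rule satisfies `T` (EV-instantiation on `T`). -/
inductive EVSeq {α : Type u} (R : Set (ERule α)) (T : Term α → Prop) :
    Set Pos → Term α → Term α → Prop
  | refl (B : Set Pos) (t : Term α) : EVSeq R T B t t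
  | step {B : Set Pos} {s s' t : Term α} (p : Pos) (ρ : ERule α) (σ : ℕ → Term α) :
      ρ ∈ R → ρ.conds = [] →
      Term.sub? p s = some (ρ.lhs.subst σ) →
      s' = Term.replaceAt (ρ.rhs.subst σ) p s →
      p ∈ B →
      (∀ x ∈ ρ.extraVars, T (σ x)) →
      EVSeq R T (nextB B p ρ.lhs ρ.rhs) s' t →
      EVSeq R T B s t

/-- An EV-safe reduction sequence `s ↪*_R t`, EV-instantiated on `T`. -/
def EVSafeI {α : Type u} (R : Set (ERule α)) (T : Term α → Prop) (s t : Term α) : Prop :=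
  EVSeq R T (PosF s) s t

/-- An EV-safe reduction sequence `s ↪*_R t`. -/
def EVSafe {α : Type u} (R : Set (ERule α)) (s t : Term α) : Prop :=
  EVSeq R (fun _ => True) (PosF s) s t

/-! ## Tree homomorphisms -/

/-- Applying the tree homomorphism determined by `h` to a term:
`φ(f(t₁, …, t_n)) = h(f){xᵢ ↦ φ(tᵢ)}` (the formal variable `xᵢ` is the variable `i - 1`). -/
def applyHom {α : Type u} (h : α → Term α) : Term α → Term α
  | .var x => .var x
  | .app f ts =>
      Term.subst (fun i => (ts.attach.map (fun s => applyHom h s.1)).getD i (Term.var i)) (h f)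
decreasing_by
  simp only [Term.app.sizeOf_spec]
  have := List.sizeOf_lt_of_mem s.2
  omega

/-- The image of a rule under a tree homomorphism. -/
def homRule {α : Type u} (h : α → Term α) (ρ : ERule α) : ERule α :=
  ⟨applyHom h ρ.lhs, applyHom h ρ.rhs,
    ρ.conds.map (fun c => (applyHom h c.1, applyHom h c.2))⟩

/-- The image of an eCTRS under a tree homomorphism. -/
def homSys {α : Type u} (h : α → Term α) (R : Set (ERule α)) : Set (ERule α) :=
  homRule h '' R

/-- `h` determines a tree homomorphism from `T(G₁,V)` to `T(G₂,V)` (w.r.t. arity `ar`):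
for `f ∈ G₁` of arity `n`, `h f` is a term over `G₂` with variables among `x₁, …, x_n`. -/
def TreeHom {α : Type u} (ar : α → ℕ) (G₁ G₂ : Set α) (h : α → Term α) : Prop :=
  ∀ f ∈ G₁, (h f).overSig G₂ ∧ ∀ x ∈ (h f).varList, x < ar f

/-- `F`-identical tree homomorphism. -/
def FIdentical {α : Type u} (ar : α → ℕ) (F : Set α) (h : α → Term α) : Prop :=
  ∀ f ∈ F, h f = Term.app f ((List.range (ar f)).map Term.var)

/-- Non-erasing tree homomorphism (on the signature `G`). -/
def HomNonErasing {α : Type u} (ar : α → ℕ) (G : Set α) (h : α → Term α) : Prop :=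
  ∀ f ∈ G, (h f).varFinset = Finset.range (ar f)

/-- The homomorphism is EV-preserving for the eTRS `S`. -/
def EVPreserving {α : Type u} (h : α → Term α) (S : Set (ERule α)) : Prop :=
  ∀ ρ ∈ S, (homRule h ρ).extraVars = ρ.extraVars

/-! ## Unravelings for join and normal CTRSs, and `Norm` -/

/-- Marchiori-style unraveling `U_J` of a join conditional rule. -/
def unravelJ {α : Type u} (uj : ERule α → α) (ρ : ERule α) : List (ERule α) :=
  if ρ.conds.isEmpty then [ρ]
  else
    [ ⟨ρ.lhs,
        Term.app (uj ρ) ((ρ.conds.foldr (fun c acc => c.1 :: c.2 :: acc) []) ++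
          (seqOf ρ.lhs.varFinset).map Term.var), []⟩,
      ⟨Term.app (uj ρ)
          (((List.range ρ.conds.length).foldr
              (fun j acc => Term.var (ρ.freshBase + j) :: Term.var (ρ.freshBase + j) :: acc) []) ++
            (seqOf ρ.lhs.varFinset).map Term.var),
        ρ.rhs, []⟩ ]

def UJSys {α : Type u} (uj : ERule α → α) (R : Set (ERule α)) : Set (ERule α) :=
  { q | ∃ ρ ∈ R, q ∈ unravelJ uj ρ }

/-- Unraveling `U_N` of a normal conditional rule. -/
def unravelN {α : Type u} (un : ERule α → α) (ρ : ERule α) : List (ERule α) :=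
  if ρ.conds.isEmpty then [ρ]
  else
    [ ⟨ρ.lhs,
        Term.app (un ρ) (ρ.conds.map Prod.fst ++ (seqOf ρ.lhs.varFinset).map Term.var), []⟩,
      ⟨Term.app (un ρ) (ρ.conds.map Prod.snd ++ (seqOf ρ.lhs.varFinset).map Term.var),
        ρ.rhs, []⟩ ]

def UNSys {α : Type u} (un : ERule α → α) (R : Set (ERule α)) : Set (ERule α) :=
  { q | ∃ ρ ∈ R, q ∈ unravelN un ρ }

/-- `Norm` on rules: `l → r ⇐ eq(s₁,t₁) ↠ eq(⊤,⊤); …; eq(s_k,t_k) ↠ eq(⊤,⊤)`. -/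
def normRule {α : Type u} (eqS topS : α) (ρ : ERule α) : ERule α :=
  ⟨ρ.lhs, ρ.rhs,
    ρ.conds.map (fun c =>
      (Term.app eqS [c.1, c.2], Term.app eqS [Term.app topS [], Term.app topS []]))⟩

/-- `Norm(R) = {eq(x,x) → eq(⊤,⊤)} ∪ {Norm(ρ) | ρ ∈ R}`. -/
def NormSys {α : Type u} (eqS topS : α) (R : Set (ERule α)) : Set (ERule α) :=
  insert
    ⟨Term.app eqS [Term.var 0, Term.var 0],
      Term.app eqS [Term.app topS [], Term.app topS []], []⟩
    (normRule eqS topS '' R)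

/-- A normal CTRS: a deterministic, non-LV CTRS all of whose condition right-hand
sides are ground normal forms w.r.t. `R_u`. -/
def NormalCTRS {α : Type u} (R : Set (ERule α)) : Prop :=
  ∀ ρ ∈ R, ρ.Det ∧ ρ.nonLV ∧ ∀ c ∈ ρ.conds, c.2.Ground ∧ IsNF (Ru R) c.2


/-
A `U_opt(R)`-reduction is simulated by the relation `Good` between mixed terms and
original terms: every `U_opt(R)`-step preserves `Good` after further `R`-reduction of the
original term, and a term over `F` simulating `v` is an `R`-reduct of `v`. At a step
`U_i(t_i, Z⃗_i) → …` the recorded substitution `τ` is updated on `Var(t_i)` by a matcher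
of the simulated reduct of `s_iτ` against `t_i`; left-linearity makes `t_i` linear and
`Var(t_i)` disjoint from `X_i`, so the update neither conflicts with nor spoils what `τ`
already satisfies. Determinism and Type 3 guarantee that every variable needed later
(in the next condition or in `r`) lies in `Z_i ∪ Var(t_i)`, hence is still available.
-/

namespace Term

variable {α : Type u}

@[induction_eliminator]
theorem induction_on {motive : Term α → Prop} (var : ∀ x, motive (.var x))
    (app : ∀ f ts, (∀ t ∈ ts, motive t) → motive (.app f ts)) (t : Term α) : motive t :=
  match t with
  | .var x => var x
  | .app f ts => app f ts fun t _ => induction_on var app t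
decreasing_by
  simp only [Term.app.sizeOf_spec]
  have := List.sizeOf_lt_of_mem ‹t ∈ ts›
  omega

private theorem foldr_attach_append {β : Type*} (l : List (Term α)) (g : Term α → List β) :
    l.attach.foldr (fun t acc => g t.1 ++ acc) [] = (l.map g).flatten := by
  induction l with
  | nil => simp
  | cons a l ih => simp_all [List.attach_cons, List.foldr_map]

@[simp] theorem varList_var (x : ℕ) : (var x : Term α).varList = [x] := by
  rw [varList]

@[simp] theorem varList_app (f : α) (ts : List (Term α)) :
    (app f ts).varList = (ts.map varList).flatten := by
  rw [varList, foldr_attach_append]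

@[simp] theorem apps_app (f : α) (ts : List (Term α)) :
    (app f ts).apps = (f, ts.length) :: (ts.map apps).flatten := by
  rw [apps, foldr_attach_append]

@[simp] theorem subst_var (σ : ℕ → Term α) (x : ℕ) : (var x : Term α).subst σ = σ x := by
  rw [subst]

@[simp] theorem subst_app (σ : ℕ → Term α) (f : α) (ts : List (Term α)) :
    (app f ts).subst σ = app f (ts.map (subst σ)) := by
  rw [subst]; simp

@[simp] theorem mem_varFinset {x : ℕ} {t : Term α} : x ∈ t.varFinset ↔ x ∈ t.varList := by
  simp [varFinset]

theorem mem_varFinset_app {x : ℕ} {f : α} {ts : List (Term α)} :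
    x ∈ (app f ts).varFinset ↔ ∃ t ∈ ts, x ∈ t.varFinset := by
  simp

theorem overSig_app {F : Set α} {f : α} {ts : List (Term α)} :
    (app f ts).overSig F ↔ f ∈ F ∧ ∀ t ∈ ts, t.overSig F := by
  simp only [overSig, apps_app, List.mem_cons, List.mem_flatten, List.mem_map,
    forall_eq_or_imp]
  exact and_congr_right fun _ =>
    ⟨fun h t ht p hp => h p ⟨_, ⟨t, ht, rfl⟩, hp⟩,
      fun h p ⟨_, ⟨t, ht, e⟩, hp⟩ => h t ht p (e ▸ hp)⟩

theorem subst_congr {σ τ : ℕ → Term α} {t : Term α}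
    (h : ∀ x ∈ t.varFinset, σ x = τ x) : t.subst σ = t.subst τ := by
  induction t with
  | var x => simpa using h x (by simp)
  | app f ts ih =>
      simp only [subst_app, app.injEq, true_and]
      exact List.map_congr_left fun s hs =>
        ih s hs fun x hx => h x (mem_varFinset_app.2 ⟨s, hs, hx⟩)

@[simp] theorem subst_var_self (t : Term α) : t.subst var = t := by
  induction t with
  | var x => simp
  | app f ts ih => simp [List.map_congr_left ih]

theorem Linear.of_app {f : α} {ts : List (Term α)} (h : (app f ts).Linear) :
    (∀ t ∈ ts, t.Linear) ∧
      Pairwise fun i j : Fin ts.length => Disjoint ts[i].varFinset ts[j].varFinset := by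
  have h' : ((ts.map varList).flatten).Nodup := by simpa [Linear] using h
  rw [List.nodup_flatten, List.pairwise_map, List.pairwise_iff_getElem] at h'
  refine ⟨fun t ht => h'.1 _ (List.mem_map_of_mem ht), fun i j hij => ?_⟩
  show Disjoint _ _
  rw [Finset.disjoint_left]
  intro x hi hj
  simp only [mem_varFinset] at hi hj
  rcases lt_or_gt_of_ne (Fin.val_ne_of_ne hij) with hlt | hlt
  · exact h'.2 i j i.2 j.2 hlt hi hj
  · exact h'.2 j i j.2 i.2 hlt hj hi

end Term

theorem mem_foldr_union_map {β : Type*} {x : ℕ} {l : List β} {g : β → Finset ℕ} :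
    x ∈ (l.map g).foldr (· ∪ ·) ∅ ↔ ∃ a ∈ l, x ∈ g a := by
  induction l with
  | nil => simp
  | cons a l ih => simp [ih]

namespace ERule

variable {α : Type u} {ρ : ERule α} {i x : ℕ}

def scond (ρ : ERule α) (i : ℕ) : Term α := (ρ.conds.getD i junkPair).1

def tcond (ρ : ERule α) (i : ℕ) : Term α := (ρ.conds.getD i junkPair).2

theorem getElem_conds (hi : i < ρ.conds.length) : ρ.conds[i] = (ρ.scond i, ρ.tcond i) := by
  simp [scond, tcond, List.getElem?_eq_getElem hi]

theorem mem_Xset : x ∈ ρ.Xset i ↔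
    x ∈ ρ.lhs.varFinset ∨ ∃ j < i, j < ρ.conds.length ∧ x ∈ (ρ.tcond j).varFinset := by
  simp only [Xset, Finset.mem_union, mem_foldr_union_map, List.mem_take_iff_getElem]
  refine or_congr_right ⟨?_, ?_⟩
  · rintro ⟨_, ⟨j, hj, rfl⟩, hx⟩
    have hjk : j < ρ.conds.length := lt_of_lt_of_le hj inf_le_right
    exact ⟨j, lt_of_lt_of_le hj inf_le_left, hjk, by rwa [getElem_conds hjk] at hx⟩
  · rintro ⟨j, hji, hjk, hx⟩
    exact ⟨_, ⟨j, lt_inf_iff.2 ⟨hji, hjk⟩, rfl⟩, by rwa [getElem_conds hjk]⟩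

theorem mem_Yset : x ∈ ρ.Yset i ↔ x ∈ ρ.rhs.varFinset ∨ x ∈ (ρ.tcond i).varFinset ∨
    ∃ j, i < j ∧ j < ρ.conds.length ∧
      (x ∈ (ρ.scond j).varFinset ∨ x ∈ (ρ.tcond j).varFinset) := by
  simp only [Yset, Finset.mem_union, mem_foldr_union_map, List.mem_drop_iff_getElem, or_assoc]
  refine or_congr_right (or_congr_right ⟨?_, ?_⟩)
  · rintro ⟨_, ⟨j, hj, rfl⟩, hx⟩
    have hj' : i + 1 + j < ρ.conds.length := by omega
    exact ⟨i + 1 + j, by omega, hj', by rwa [getElem_conds hj'] at hx⟩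
  · rintro ⟨j, hij, hjk, hx⟩
    exact ⟨ρ.conds[j], ⟨j - (i + 1), by omega, by congr 1; omega⟩,
      by rwa [getElem_conds hjk]⟩

theorem mem_Zset : x ∈ ρ.Zset i ↔ x ∈ ρ.Xset i ∧ x ∈ ρ.Yset i := Finset.mem_inter

theorem Xset_zero : ρ.Xset 0 = ρ.lhs.varFinset := by
  ext x; simp [mem_Xset]

theorem lhs_subset_Xset : ρ.lhs.varFinset ⊆ ρ.Xset i :=
  fun _ hx => mem_Xset.2 (Or.inl hx)

theorem tcond_subset_Xset {j : ℕ} (hj : j < i) (hjk : j < ρ.conds.length) :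
    (ρ.tcond j).varFinset ⊆ ρ.Xset i :=
  fun _ hx => mem_Xset.2 (Or.inr ⟨j, hj, hjk, hx⟩)

theorem Xset_mono {i' : ℕ} (h : i ≤ i') : ρ.Xset i ⊆ ρ.Xset i' := by
  intro x hx
  rcases mem_Xset.1 hx with hl | ⟨j, hj, hjk, ht⟩
  · exact lhs_subset_Xset hl
  · exact tcond_subset_Xset (lt_of_lt_of_le hj h) hjk ht

theorem mem_Xset_succ (hi : i < ρ.conds.length) :
    x ∈ ρ.Xset (i + 1) ↔ x ∈ ρ.Xset i ∨ x ∈ (ρ.tcond i).varFinset := by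
  refine ⟨fun hx => ?_, ?_⟩
  · rcases mem_Xset.1 hx with hl | ⟨j, hj, hjk, ht⟩
    · exact Or.inl (lhs_subset_Xset hl)
    · rcases Nat.lt_succ_iff_lt_or_eq.1 hj with hj | rfl
      · exact Or.inl (tcond_subset_Xset hj hjk ht)
      · exact Or.inr ht
  · rintro (hx | hx)
    · exact Xset_mono (Nat.le_succ i) hx
    · exact tcond_subset_Xset (Nat.lt_succ_self i) hi hx

theorem Zset_zero_subset : ρ.Zset 0 ⊆ ρ.lhs.varFinset :=
  fun _ hx => Xset_zero ▸ (mem_Zset.1 hx).1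

theorem mem_Zset_of_mem_tcond_mem_Xset (hx : x ∈ (ρ.tcond i).varFinset) (hX : x ∈ ρ.Xset i) :
    x ∈ ρ.Zset i :=
  mem_Zset.2 ⟨hX, mem_Yset.2 (Or.inr (Or.inl hx))⟩

theorem mem_Zset_or_tcond_of_mem_Zset_succ (hi : i + 1 < ρ.conds.length)
    (hx : x ∈ ρ.Zset (i + 1)) : x ∈ ρ.Zset i ∨ x ∈ (ρ.tcond i).varFinset := by
  obtain ⟨hX, hY⟩ := mem_Zset.1 hx
  refine (mem_Xset_succ (by omega)).1 hX |>.imp (fun hX => mem_Zset.2 ⟨hX, ?_⟩) id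
  rcases mem_Yset.1 hY with hr | ht | ⟨j, hj, hjk, hst⟩
  · exact mem_Yset.2 (Or.inl hr)
  · exact mem_Yset.2 (Or.inr (Or.inr ⟨i + 1, Nat.lt_succ_self i, hi, Or.inr ht⟩))
  · exact mem_Yset.2 (Or.inr (Or.inr ⟨j, by omega, hjk, hst⟩))

theorem Det.scond_subset_Xset (hd : ρ.Det) (hi : i < ρ.conds.length) :
    (ρ.scond i).varFinset ⊆ ρ.Xset i :=
  hd i hi

theorem Det.scond_zero_subset (hd : ρ.Det) (hk : 0 < ρ.conds.length) :
    (ρ.scond 0).varFinset ⊆ ρ.lhs.varFinset :=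
  Xset_zero (ρ := ρ) ▸ hd.scond_subset_Xset hk

theorem Det.mem_Zset_or_tcond_of_mem_scond_succ (hd : ρ.Det) (hi : i + 1 < ρ.conds.length)
    (hx : x ∈ (ρ.scond (i + 1)).varFinset) : x ∈ ρ.Zset i ∨ x ∈ (ρ.tcond i).varFinset :=
  (mem_Xset_succ (by omega)).1 (hd.scond_subset_Xset hi hx) |>.imp (fun hX =>
    mem_Zset.2 ⟨hX, mem_Yset.2 (Or.inr (Or.inr ⟨i + 1, by omega, hi, Or.inl hx⟩))⟩) id

theorem Type3.mem_of_mem_rhs (h3 : ρ.Type3) (hx : x ∈ ρ.rhs.varFinset) :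
    x ∈ ρ.lhs.varFinset ∨ ∃ j < ρ.conds.length,
      x ∈ (ρ.scond j).varFinset ∨ x ∈ (ρ.tcond j).varFinset := by
  have := h3 hx
  simp only [Finset.mem_union, mem_foldr_union_map, List.mem_iff_getElem] at this
  refine this.imp_right ?_
  rintro ⟨_, ⟨j, hj, rfl⟩, hst⟩
  exact ⟨j, hj, by rwa [getElem_conds hj] at hst⟩

theorem Type3.rhs_subset_lhs (h3 : ρ.Type3) (hk : ρ.conds = []) :
    ρ.rhs.varFinset ⊆ ρ.lhs.varFinset := fun _ hx =>
  (h3.mem_of_mem_rhs hx).resolve_right (by simp [hk])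

theorem mem_Zset_or_tcond_of_mem_rhs (hd : ρ.Det) (h3 : ρ.Type3) (hi : i + 1 = ρ.conds.length)
    (hx : x ∈ ρ.rhs.varFinset) : x ∈ ρ.Zset i ∨ x ∈ (ρ.tcond i).varFinset := by
  have hY : x ∈ ρ.Yset i := mem_Yset.2 (Or.inl hx)
  rcases h3.mem_of_mem_rhs hx with hl | ⟨j, hj, hs | ht⟩
  · exact Or.inl (mem_Zset.2 ⟨lhs_subset_Xset hl, hY⟩)
  · exact Or.inl (mem_Zset.2 ⟨Xset_mono (by omega) (hd.scond_subset_Xset hj hs), hY⟩)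
  · rcases Nat.lt_or_ge j i with hlt | hge
    · exact Or.inl (mem_Zset.2 ⟨tcond_subset_Xset hlt hj ht, hY⟩)
    · exact Or.inr (show j = i by omega ▸ ht)

end ERule

section Unraveling

variable {α : Type u}

theorem varList_mkU (f : α) (t : Term α) (xs : List ℕ) :
    (mkU f t xs).varList = t.varList ++ xs := by
  simp only [mkU, Term.varList_app, List.map_cons, List.map_map, List.flatten_cons]
  congr 1
  induction xs <;> simp_all

theorem mkU_subst (σ : ℕ → Term α) (f : α) (t : Term α) (xs : List ℕ) :
    (mkU f t xs).subst σ = .app f (t.subst σ :: xs.map σ) := by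
  simp [mkU, Function.comp_def]

theorem Term.Linear.of_mkU {f : α} {t : Term α} {xs : List ℕ} (h : (mkU f t xs).Linear) :
    t.Linear ∧ ∀ x ∈ t.varFinset, x ∉ xs := by
  rw [Term.Linear, varList_mkU, List.nodup_append] at h
  exact ⟨h.1, fun x hx hxs => h.2.2 x (by simpa using hx) x hxs rfl⟩

@[simp] theorem mem_seqOf {x : ℕ} {s : Finset ℕ} : x ∈ seqOf s ↔ x ∈ s :=
  Finset.mem_sort _

theorem of_mem_unravelOpt {u' : ℕ → α} {ρ q : ERule α} (hq : q ∈ unravelOpt u' ρ) :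
    (ρ.conds = [] ∧ q = ⟨ρ.lhs, ρ.rhs, []⟩) ∨
    (0 < ρ.conds.length ∧ q = ⟨ρ.lhs, mkU (u' 0) (ρ.scond 0) (seqOf (ρ.Zset 0)), []⟩) ∨
    (∃ i, i + 1 < ρ.conds.length ∧ q = ⟨mkU (u' i) (ρ.tcond i) (seqOf (ρ.Zset i)),
      mkU (u' (i + 1)) (ρ.scond (i + 1)) (seqOf (ρ.Zset (i + 1))), []⟩) ∨
    (∃ i, i + 1 = ρ.conds.length ∧
      q = ⟨mkU (u' i) (ρ.tcond i) (seqOf (ρ.Zset i)), ρ.rhs, []⟩) := by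
  simp only [unravelOpt, unravelWith, List.mem_map, List.mem_range] at hq
  obtain ⟨j, hj, rfl⟩ := hq
  rcases j with _ | i
  · by_cases hk : 0 < ρ.conds.length
    · exact Or.inr (Or.inl ⟨hk, by simp [hk, ERule.scond]⟩)
    · exact Or.inl ⟨List.eq_nil_of_length_eq_zero (by omega), by simp [hk]⟩
  · by_cases hi : i + 1 < ρ.conds.length
    · exact Or.inr (Or.inr (Or.inl ⟨i, hi, by simp [hi, ERule.scond, ERule.tcond]⟩))
    · exact Or.inr (Or.inr (Or.inr ⟨i, by omega, by simp [hi, ERule.tcond]⟩))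

end Unraveling

section Reduction

variable {α : Type u} {R : Set (ERule α)}

theorem Red.exists_ctx {w w' : Term α} (h : Red R w w') :
    ∃ q ∈ R, ∃ (C : Ctx α) (σ : ℕ → Term α),
      w = C.plug (q.lhs.subst σ) ∧ w' = C.plug (q.rhs.subst σ) := by
  obtain ⟨n, h⟩ := h
  induction n with
  | zero => exact h.elim
  | succ n ih =>
      rcases h with h | ⟨q, hq, C, σ, hw, hw', -⟩
      · exact ih h
      · exact ⟨q, hq, C, σ, hw, hw'⟩

theorem redN_mono {m n : ℕ} (hmn : m ≤ n) {s t : Term α} (h : RedN R m s t) :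
    RedN R n s t := by
  induction m generalizing n s t with
  | zero => exact h.elim
  | succ m ih =>
      obtain ⟨n, rfl⟩ : ∃ n', n = n' + 1 := ⟨n - 1, by omega⟩
      rcases h with h | ⟨ρ, hρ, C, σ, hs, ht, hc⟩
      · exact Or.inl (ih (by omega) h)
      · exact Or.inr ⟨ρ, hρ, C, σ, hs, ht, fun c hc' =>
          .mono (fun _ _ => ih (by omega)) _ _ (hc c hc')⟩

theorem RedStar.exists_redN {s t : Term α} (h : RedStar R s t) :
    ∃ n, Relation.ReflTransGen (RedN R n) s t := by
  induction h with
  | refl => exact ⟨0, .refl⟩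
  | tail _ hbc ih =>
      obtain ⟨n₁, h₁⟩ := ih
      obtain ⟨n₂, h₂⟩ := hbc
      exact ⟨max n₁ n₂, .tail (.mono (fun _ _ => redN_mono (le_max_left _ _)) _ _ h₁)
        (redN_mono (le_max_right _ _) h₂)⟩

theorem exists_redN_of_forall_redStar {σ : ℕ → Term α} (cs : List (Term α × Term α))
    (hc : ∀ c ∈ cs, RedStar R (c.1.subst σ) (c.2.subst σ)) :
    ∃ n, ∀ c ∈ cs, Relation.ReflTransGen (RedN R n) (c.1.subst σ) (c.2.subst σ) := by
  induction cs with
  | nil => exact ⟨0, by simp⟩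
  | cons c cs ih =>
      obtain ⟨n₁, h₁⟩ := ih fun c' hc' => hc c' (List.mem_cons_of_mem _ hc')
      obtain ⟨n₂, h₂⟩ := (hc c List.mem_cons_self).exists_redN
      refine ⟨max n₁ n₂, fun c' hc' => ?_⟩
      rcases List.mem_cons.1 hc' with rfl | hc'
      · exact .mono (fun _ _ => redN_mono (le_max_right _ _)) _ _ h₂
      · exact .mono (fun _ _ => redN_mono (le_max_left _ _)) _ _ (h₁ c' hc')

theorem red_of_conds {ρ : ERule α} (hρ : ρ ∈ R) (σ : ℕ → Term α)
    (hc : ∀ c ∈ ρ.conds, RedStar R (c.1.subst σ) (c.2.subst σ)) :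
    Red R (ρ.lhs.subst σ) (ρ.rhs.subst σ) :=
  have ⟨n, hn⟩ := exists_redN_of_forall_redStar ρ.conds hc
  ⟨n + 1, Or.inr ⟨ρ, hρ, .hole, σ, rfl, rfl, hn⟩⟩

theorem RedStar.app_arg {a b : Term α} (h : RedStar R a b) (f : α) (pre post : List (Term α)) :
    RedStar R (.app f (pre ++ a :: post)) (.app f (pre ++ b :: post)) := by
  refine h.lift (fun x => Term.app f (pre ++ x :: post)) fun _ _ ⟨n, hn⟩ => ⟨n, ?_⟩
  induction n with
  | zero => exact hn.elim
  | succ n ih =>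
      rcases hn with hn | ⟨ρ, hρ, C, σ, rfl, rfl, hc⟩
      · exact Or.inl (ih hn)
      · exact Or.inr ⟨ρ, hρ, .app f pre C post, σ, rfl, rfl, hc⟩

theorem redStar_app_of_forall (f : α) {as bs : List (Term α)} (hl : as.length = bs.length)
    (h : ∀ i (hi : i < as.length) (hi' : i < bs.length), RedStar R as[i] bs[i]) :
    RedStar R (.app f as) (.app f bs) := by
  suffices ∀ pre, RedStar R (.app f (pre ++ as)) (.app f (pre ++ bs)) by simpa using this []
  induction as generalizing bs with
  | nil => simp [List.length_eq_zero_iff.1 hl.symm, RedStar, Relation.ReflTransGen.refl]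
  | cons a as ih =>
      obtain ⟨b, bs, rfl⟩ := List.exists_cons_of_length_eq_add_one hl.symm
      intro pre
      have hab := (h 0 (by simp) (by simp)).app_arg f pre as
      have hrest := ih (bs := bs) (by simpa using hl)
        (fun i hi hi' => h (i + 1) (by simpa using hi) (by simpa using hi')) (pre ++ [b])
      simp only [List.append_assoc, List.cons_append, List.nil_append] at hrest
      exact hab.trans hrest

end Reduction

theorem exists_eq_on_of_pairwise_disjoint {ι β γ : Type*} [Nonempty γ] {S : ι → Finset β}
    (hS : Pairwise fun i j => Disjoint (S i) (S j)) (f : ι → β → γ) :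
    ∃ g : β → γ, ∀ i, ∀ x ∈ S i, g x = f i x := by
  classical
  refine ⟨fun x => if h : ∃ i, x ∈ S i then f h.choose x else Classical.arbitrary γ,
    fun i x hx => ?_⟩
  have h : ∃ i, x ∈ S i := ⟨i, hx⟩
  have hi : h.choose = i := by
    by_contra hne
    exact Finset.disjoint_left.1 (hS hne) h.choose_spec hx
  simp only [dif_pos h, hi]

theorem forall_getElem_set {β γ : Type*} {P : β → γ → Prop} {ws : List β} {vs : List γ}
    (h : ∀ j (h₁ : j < ws.length) (h₂ : j < vs.length), P ws[j] vs[j])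
    (n : ℕ) {b : β} {c : γ} (hbc : P b c) :
    ∀ j (h₁ : j < (ws.set n b).length) (h₂ : j < (vs.set n c).length),
      P (ws.set n b)[j] (vs.set n c)[j] := by
  intro j h₁ h₂
  simp only [List.getElem_set]
  split_ifs
  · exact hbc
  · exact h j (by simpa using h₁) (by simpa using h₂)

theorem set_length_append_cons {β : Type*} (pre post : List β) (a b : β) :
    (pre ++ a :: post).set pre.length b = pre ++ b :: post := by
  simp [List.set_append_right]

theorem ERule.overSig.cond {α : Type u} {F : Set α} {ρ : ERule α} (h : ρ.overSig F) {i : ℕ}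
    (hi : i < ρ.conds.length) : (ρ.scond i).overSig F ∧ (ρ.tcond i).overSig F := by
  have := h.2.2 _ (List.getElem_mem hi)
  rwa [ERule.getElem_conds hi] at this

theorem redStar_app_set {α : Type u} {R : Set (ERule α)} (f : α) {vs : List (Term α)} {n : ℕ}
    (hn : n < vs.length) {c : Term α} (h : RedStar R vs[n] c) :
    RedStar R (.app f vs) (.app f (vs.set n c)) :=
  redStar_app_of_forall f (by simp) fun j _ _ => by
    simp only [List.getElem_set]
    split_ifs with hnj
    · exact hnj ▸ h
    · exact .refl

section Good

variable {α : Type u}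

/-- `Good F R u w v`: the mixed term `w` simulates the original term `v`. A U-rooted
`U^ρ_i(w₀, w⃗)` simulates `v` when `v →*_R lτ` for a `τ` satisfying the conditions before
the `i`-th one (0-based), `w₀` simulates a reduct of `s_iτ` and `w⃗` simulates `τ(Z⃗_i)`. -/
inductive Good (F : Set α) (R : Set (ERule α)) (u : ERule α → ℕ → α) :
    Term α → Term α → Prop where
  | var (x : ℕ) : Good F R u (.var x) (.var x)
  | appF {f : α} {ws vs : List (Term α)} :
      f ∈ F → ws.length = vs.length →
      (∀ j (h₁ : j < ws.length) (h₂ : j < vs.length), Good F R u ws[j] vs[j]) →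
      Good F R u (.app f ws) (.app f vs)
  | appU {ρ : ERule α} {i : ℕ} {w₀ v₀ v : Term α} {ws : List (Term α)}
      {τ : ℕ → Term α} :
      ρ ∈ R → i < ρ.conds.length →
      RedStar R v (ρ.lhs.subst τ) →
      (∀ j < i, RedStar R ((ρ.scond j).subst τ) ((ρ.tcond j).subst τ)) →
      RedStar R ((ρ.scond i).subst τ) v₀ → Good F R u w₀ v₀ →
      ws.length = ((seqOf (ρ.Zset i)).map τ).length →
      (∀ j (h₁ : j < ws.length) (h₂ : j < ((seqOf (ρ.Zset i)).map τ).length),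
        Good F R u ws[j] ((seqOf (ρ.Zset i)).map τ)[j]) →
      Good F R u (.app (u ρ i) (w₀ :: ws)) v
  | closure {w v v' : Term α} : RedStar R v v' → Good F R u w v' → Good F R u w v

variable {F : Set α} {R : Set (ERule α)} {u : ERule α → ℕ → α}

theorem Good.subst {t : Term α} (ht : t.overSig F) {σ τ : ℕ → Term α}
    (h : ∀ x ∈ t.varFinset, Good F R u (σ x) (τ x)) :
    Good F R u (t.subst σ) (t.subst τ) := by
  induction t with
  | var x => simpa using h x (by simp)
  | app f ts ih =>
      rw [Term.overSig_app] at ht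
      simp only [Term.subst_app]
      refine .appF ht.1 (by simp) fun j h₁ _ => ?_
      have hj : ts[j]'(by simpa using h₁) ∈ ts := List.getElem_mem _
      simpa using ih _ hj (ht.2 _ hj) fun x hx => h x (Term.mem_varFinset_app.2 ⟨_, hj, hx⟩)

theorem Good.refl {t : Term α} (ht : t.overSig F) : Good F R u t t := by
  simpa using Good.subst (R := R) (u := u) ht fun x _ => .var x

theorem Good.redStar_of_overSig (hU : ∀ ρ ∈ R, ∀ i < ρ.conds.length, u ρ i ∉ F)
    {w v : Term α} (h : Good F R u w v) (hw : w.overSig F) : RedStar R v w := by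
  induction h with
  | var x => exact .refl
  | appF _ hl _ ih =>
      rw [Term.overSig_app] at hw
      exact redStar_app_of_forall _ hl.symm fun j h₁ h₂ =>
        ih j h₂ h₁ (hw.2 _ (List.getElem_mem _))
  | appU hρ hi _ _ _ _ _ _ => exact absurd (Term.overSig_app.1 hw).1 (hU _ hρ _ hi)
  | closure hred _ ih => exact hred.trans (ih hw)

theorem Good.exists_args_of_mem (hU : ∀ ρ ∈ R, ∀ i < ρ.conds.length, u ρ i ∉ F)
    {f : α} (hf : f ∈ F) {ws : List (Term α)} {v : Term α} (h : Good F R u (.app f ws) v) :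
    ∃ vs, RedStar R v (.app f vs) ∧ ws.length = vs.length ∧
      ∀ j (h₁ : j < ws.length) (h₂ : j < vs.length), Good F R u ws[j] vs[j] := by
  generalize hw : Term.app f ws = w at h
  induction h with
  | var => cases hw
  | appF _ hl hg =>
      obtain ⟨rfl, rfl⟩ := Term.app.inj hw
      exact ⟨_, .refl, hl, hg⟩
  | appU hρ hi _ _ _ _ _ _ =>
      obtain ⟨rfl, -⟩ := Term.app.inj hw
      exact absurd hf (hU _ hρ _ hi)
  | closure hred _ ih =>
      obtain ⟨vs, hv, hvs⟩ := ih hw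
      exact ⟨vs, hred.trans hv, hvs⟩

theorem Good.exists_of_uSymbol (hfresh : UFresh F u R) {ρ : ERule α} {i : ℕ} (hρ : ρ ∈ R)
    (hi : i < ρ.conds.length) {w₀ v : Term α} {ws : List (Term α)}
    (h : Good F R u (.app (u ρ i) (w₀ :: ws)) v) :
    ∃ τ v₀, RedStar R v (ρ.lhs.subst τ) ∧
      (∀ j < i, RedStar R ((ρ.scond j).subst τ) ((ρ.tcond j).subst τ)) ∧
      RedStar R ((ρ.scond i).subst τ) v₀ ∧ Good F R u w₀ v₀ ∧
      ∀ j (h₁ : j < ws.length) (h₂ : j < ((seqOf (ρ.Zset i)).map τ).length),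
        Good F R u ws[j] ((seqOf (ρ.Zset i)).map τ)[j] := by
  generalize hw : Term.app (u ρ i) (w₀ :: ws) = w at h
  induction h with
  | var => cases hw
  | appF hf _ _ =>
      obtain ⟨rfl, -⟩ := Term.app.inj hw
      exact absurd hf (hfresh.1 _ hρ _ hi)
  | appU hρ' hi' hv hconds hs₀ hg₀ _ hargs =>
      obtain ⟨hu, hargs'⟩ := Term.app.inj hw
      obtain ⟨rfl, rfl⟩ := hfresh.2 _ hρ' _ hρ _ hi' _ hi hu.symm
      obtain ⟨rfl, rfl⟩ := List.cons.inj hargs'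
      exact ⟨_, _, hv, hconds, hs₀, hg₀, hargs⟩
  | closure hred _ ih =>
      obtain ⟨τ, v₀, hv, hrest⟩ := ih hw
      exact ⟨τ, v₀, hred.trans hv, hrest⟩

theorem Good.exists_subst_of_linear (hU : ∀ ρ ∈ R, ∀ i < ρ.conds.length, u ρ i ∉ F)
    {t : Term α} (ht : t.overSig F) (hlin : t.Linear) {σ : ℕ → Term α} {v : Term α}
    (h : Good F R u (t.subst σ) v) :
    ∃ τ, RedStar R v (t.subst τ) ∧ ∀ x ∈ t.varFinset, Good F R u (σ x) (τ x) := by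
  induction t generalizing σ v with
  | var x => exact ⟨fun _ => v, by rw [Term.subst_var]; exact .refl, by simpa using h⟩
  | app g ts ih =>
      rw [Term.overSig_app] at ht
      obtain ⟨hlins, hdisj⟩ := hlin.of_app
      rw [Term.subst_app] at h
      obtain ⟨vs, hv, hlen, hargs⟩ := h.exists_args_of_mem hU ht.1
      have hlen' : ts.length = vs.length := by simpa using hlen
      have hmatch (j : Fin ts.length) : ∃ τ, RedStar R vs[j] (ts[j].subst τ) ∧
          ∀ x ∈ ts[j].varFinset, Good F R u (σ x) (τ x) := by
        have hj := List.getElem_mem j.2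
        exact ih _ hj (ht.2 _ hj) (hlins _ hj) (by simpa using hargs j (by simp) (by omega))
      choose τs hred hgood using hmatch
      have : Nonempty (Term α) := ⟨.var 0⟩
      obtain ⟨τ, hτ⟩ := exists_eq_on_of_pairwise_disjoint hdisj τs
      refine ⟨τ, hv.trans ?_, fun x hx => ?_⟩
      · rw [Term.subst_app]
        refine redStar_app_of_forall g (by simp [hlen']) fun j h₁ _ => ?_
        have hj : j < ts.length := by omega
        have := hred ⟨j, hj⟩
        rw [← Term.subst_congr (hτ ⟨j, hj⟩)] at this
        simpa using this
      · obtain ⟨_, hmem, hx⟩ := Term.mem_varFinset_app.1 hx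
        obtain ⟨j, hj, rfl⟩ := List.mem_iff_getElem.1 hmem
        exact hτ ⟨j, hj⟩ x hx ▸ hgood ⟨j, hj⟩ x hx

end Good

section Simulation

variable {α : Type u} {F : Set α} {R : Set (ERule α)} {u : ERule α → ℕ → α}

theorem Good.appU_of_matches {ρ : ERule α} (hρ : ρ ∈ R) (hsρ : ρ.overSig F) {i : ℕ}
    (hi : i < ρ.conds.length) {σ τ : ℕ → Term α} {v : Term α}
    (hv : RedStar R v (ρ.lhs.subst τ))
    (hconds : ∀ j < i, RedStar R ((ρ.scond j).subst τ) ((ρ.tcond j).subst τ))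
    (hs : ∀ x ∈ (ρ.scond i).varFinset, Good F R u (σ x) (τ x))
    (hZ : ∀ x ∈ ρ.Zset i, Good F R u (σ x) (τ x)) :
    Good F R u ((mkU (u ρ i) (ρ.scond i) (seqOf (ρ.Zset i))).subst σ) v := by
  rw [mkU_subst]
  refine .appU hρ hi hv hconds .refl (.subst (hsρ.cond hi).1 hs) (by simp) fun j _ _ => ?_
  simpa using hZ _ (mem_seqOf.1 (List.getElem_mem _))

theorem exists_good_rhs_of_matches {ρ : ERule α} (hρ : ρ ∈ R) (hsρ : ρ.overSig F)
    {σ τ : ℕ → Term α} {v : Term α} (hv : RedStar R v (ρ.lhs.subst τ))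
    (hconds : ∀ j < ρ.conds.length, RedStar R ((ρ.scond j).subst τ) ((ρ.tcond j).subst τ))
    (hr : ∀ x ∈ ρ.rhs.varFinset, Good F R u (σ x) (τ x)) :
    ∃ v', RedStar R v v' ∧ Good F R u (ρ.rhs.subst σ) v' := by
  refine ⟨ρ.rhs.subst τ, hv.tail (red_of_conds hρ τ fun c hc => ?_), .subst hsρ.2.1 hr⟩
  obtain ⟨j, hj, rfl⟩ := List.mem_iff_getElem.1 hc
  simpa [ERule.getElem_conds hj] using hconds j hj

theorem Good.exists_matcher_of_uSymbol (hfresh : UFresh F u R) {ρ : ERule α} (hρ : ρ ∈ R)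
    (hsρ : ρ.overSig F) (hd : ρ.Det) {i : ℕ} (hi : i < ρ.conds.length)
    (hlin : (mkU (u ρ i) (ρ.tcond i) (seqOf (ρ.Zset i))).Linear) {σ : ℕ → Term α}
    {v : Term α} (h : Good F R u ((mkU (u ρ i) (ρ.tcond i) (seqOf (ρ.Zset i))).subst σ) v) :
    ∃ τ, RedStar R v (ρ.lhs.subst τ) ∧
      (∀ j < i + 1, RedStar R ((ρ.scond j).subst τ) ((ρ.tcond j).subst τ)) ∧
      ∀ x, x ∈ ρ.Zset i ∨ x ∈ (ρ.tcond i).varFinset → Good F R u (σ x) (τ x) := by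
  classical
  rw [mkU_subst] at h
  obtain ⟨τ, v₀, hv, hconds, hs₀, hg₀, hargs⟩ := h.exists_of_uSymbol hfresh hρ hi
  obtain ⟨htlin, hdisj⟩ := hlin.of_mkU
  obtain ⟨τt, hv₀, hgt⟩ := hg₀.exists_subst_of_linear hfresh.1 (hsρ.cond hi).2 htlin
  let τ' x := if x ∈ (ρ.tcond i).varFinset then τt x else τ x
  have hXagree {t : Term α} (ht : t.varFinset ⊆ ρ.Xset i) : t.subst τ' = t.subst τ :=
    Term.subst_congr fun x hx => if_neg fun hxt =>
      hdisj x hxt (mem_seqOf.2 (ERule.mem_Zset_of_mem_tcond_mem_Xset hxt (ht hx)))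
  have htagree : (ρ.tcond i).subst τ' = (ρ.tcond i).subst τt :=
    Term.subst_congr fun _ hx => if_pos hx
  refine ⟨τ', by rwa [hXagree ERule.lhs_subset_Xset], fun j hj => ?_, fun x hx => ?_⟩
  · rcases Nat.lt_succ_iff_lt_or_eq.1 hj with hj | rfl
    · rw [hXagree (ERule.Xset_mono hj.le |>.trans' (hd.scond_subset_Xset (by omega))),
        hXagree (ERule.tcond_subset_Xset hj (by omega))]
      exact hconds j hj
    · rw [hXagree (hd.scond_subset_Xset hi), htagree]
      exact hs₀.trans hv₀
  · by_cases hxt : x ∈ (ρ.tcond i).varFinset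
    · rw [show τ' x = τt x from if_pos hxt]
      exact hgt x hxt
    · rw [show τ' x = τ x from if_neg hxt]
      obtain ⟨j, hj, rfl⟩ := List.mem_iff_getElem.1 (mem_seqOf.2 (hx.resolve_right hxt))
      have := hargs j (by simpa using hj) (by simpa using hj)
      rwa [List.getElem_map, List.getElem_map] at this

def SimulatedStep (F : Set α) (R : Set (ERule α)) (u : ERule α → ℕ → α) (w w' : Term α) :
    Prop :=
  ∀ v, Good F R u w v → ∃ v', RedStar R v v' ∧ Good F R u w' v'

theorem SimulatedStep.refl (w : Term α) : SimulatedStep F R u w w :=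
  fun v h => ⟨v, .refl, h⟩

theorem SimulatedStep.trans {w₁ w₂ w₃ : Term α} (h₁₂ : SimulatedStep F R u w₁ w₂)
    (h₂₃ : SimulatedStep F R u w₂ w₃) : SimulatedStep F R u w₁ w₃ := fun v h =>
  have ⟨v₂, hv₂, h₂⟩ := h₁₂ v h
  have ⟨v₃, hv₃, h₃⟩ := h₂₃ v₂ h₂
  ⟨v₃, hv₂.trans hv₃, h₃⟩

theorem simulatedStep_root (hsig : ∀ ρ ∈ R, ρ.overSig F)
    (hdet : ∀ ρ ∈ R, ρ.Det ∧ ρ.Type3)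
    (hLL : ∀ ρ ∈ R, ∀ q ∈ unravelOpt (u ρ) ρ, q.LL) (hfresh : UFresh F u R)
    {q : ERule α} (hq : q ∈ UoptSys u R) (σ : ℕ → Term α) :
    SimulatedStep F R u (q.lhs.subst σ) (q.rhs.subst σ) := by
  intro v h
  obtain ⟨ρ, hρ, hqρ⟩ := hq
  have hlin : q.lhs.Linear := hLL ρ hρ q hqρ
  obtain ⟨hd, h3⟩ := hdet ρ hρ
  rcases of_mem_unravelOpt hqρ with
    ⟨hk, rfl⟩ | ⟨hk, rfl⟩ | ⟨i, hi, rfl⟩ | ⟨i, hi, rfl⟩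
  · obtain ⟨τ, hv, hg⟩ := h.exists_subst_of_linear hfresh.1 (hsig ρ hρ).1 hlin
    exact exists_good_rhs_of_matches hρ (hsig ρ hρ) hv (by simp [hk])
      fun x hx => hg x (h3.rhs_subset_lhs hk hx)
  · obtain ⟨τ, hv, hg⟩ := h.exists_subst_of_linear hfresh.1 (hsig ρ hρ).1 hlin
    exact ⟨v, .refl, Good.appU_of_matches hρ (hsig ρ hρ) hk hv (by simp)
      (fun x hx => hg x (hd.scond_zero_subset hk hx))
      fun x hx => hg x (ERule.Zset_zero_subset hx)⟩
  · obtain ⟨τ, hv, hconds, hg⟩ :=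
      h.exists_matcher_of_uSymbol hfresh hρ (hsig ρ hρ) hd (by omega) hlin
    exact ⟨v, .refl, Good.appU_of_matches hρ (hsig ρ hρ) hi hv hconds
      (fun x hx => hg x (hd.mem_Zset_or_tcond_of_mem_scond_succ hi hx))
      fun x hx => hg x (ERule.mem_Zset_or_tcond_of_mem_Zset_succ hi hx)⟩
  · obtain ⟨τ, hv, hconds, hg⟩ :=
      h.exists_matcher_of_uSymbol hfresh hρ (hsig ρ hρ) hd (by omega) hlin
    exact exists_good_rhs_of_matches hρ (hsig ρ hρ) hv (hi ▸ hconds)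
      fun x hx => hg x (ERule.mem_Zset_or_tcond_of_mem_rhs hd h3 hi hx)

theorem SimulatedStep.app_arg {a b : Term α} (hab : SimulatedStep F R u a b) (f : α)
    (pre post : List (Term α)) :
    SimulatedStep F R u (.app f (pre ++ a :: post)) (.app f (pre ++ b :: post)) := by
  intro v h
  generalize hw : Term.app f (pre ++ a :: post) = w at h
  induction h generalizing pre with
  | var => cases hw
  | appF hf hl hg =>
      obtain ⟨rfl, rfl⟩ := Term.app.inj hw
      have hn : pre.length < _ := hl ▸ (by simp : pre.length < (pre ++ a :: post).length)
      obtain ⟨v', hv', hbv'⟩ := hab _ (by simpa using hg pre.length (by simp) hn)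
      refine ⟨_, redStar_app_set _ hn hv', .appF hf (by simpa using hl) ?_⟩
      simpa [set_length_append_cons] using
        forall_getElem_set hg pre.length (b := b) (by simpa using hbv')
  | appU hρ hi hv hconds hs₀ hg₀ hl hargs =>
      obtain ⟨rfl, hargs'⟩ := Term.app.inj hw
      rcases pre with _ | ⟨p, pre⟩
      · obtain ⟨rfl, rfl⟩ := List.cons.inj hargs'
        obtain ⟨v₀', hv₀', hbv₀'⟩ := hab _ hg₀
        exact ⟨_, .refl, .appU hρ hi hv hconds (hs₀.trans hv₀') hbv₀' hl hargs⟩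
      · rw [List.cons_append] at hargs'
        obtain ⟨rfl, rfl⟩ := List.cons.inj hargs'
        have hn : pre.length < _ := hl ▸ (by simp : pre.length < (pre ++ a :: post).length)
        have ha := hargs pre.length (by simp) hn
        rw [List.getElem_of_append rfl rfl] at ha
        obtain ⟨v', hv', hbv'⟩ := hab _ ha
        have hb := forall_getElem_set hargs pre.length (b := b) (.closure hv' hbv')
        rw [set_length_append_cons, List.set_getElem_self] at hb
        exact ⟨_, .refl, .appU hρ hi hv hconds hs₀ hg₀ (by simpa using hl) hb⟩
  | closure hred _ ih =>
      obtain ⟨v', hv', hbv'⟩ := ih pre hw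
      exact ⟨v', hred.trans hv', hbv'⟩

theorem SimulatedStep.plug {a b : Term α} (hab : SimulatedStep F R u a b) (C : Ctx α) :
    SimulatedStep F R u (C.plug a) (C.plug b) := by
  induction C with
  | hole => exact hab
  | app f pre C post ih => exact ih.app_arg f pre post

theorem simulatedStep_of_redStar (hsig : ∀ ρ ∈ R, ρ.overSig F)
    (hdet : ∀ ρ ∈ R, ρ.Det ∧ ρ.Type3)
    (hLL : ∀ ρ ∈ R, ∀ q ∈ unravelOpt (u ρ) ρ, q.LL)
    (hfresh : UFresh F u R) {s t : Term α} (h : RedStar (UoptSys u R) s t) :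
    SimulatedStep F R u s t := by
  induction h with
  | refl => exact .refl s
  | tail _ hstep ih =>
      obtain ⟨q, hq, C, σ, rfl, rfl⟩ := hstep.exists_ctx
      exact ih.trans ((simulatedStep_root hsig hdet hLL hfresh hq σ).plug C)

end Simulation

theorem uopt_sound_of_ultraLL_type3_general {α : Type u} (F : Set α) (R : Set (ERule α))
    (u : ERule α → ℕ → α)
    (hsig : ∀ ρ ∈ R, ρ.overSig F)
    (hdet : ∀ ρ ∈ R, ρ.Det ∧ ρ.Type3)
    (hLL : ∀ ρ ∈ R, ∀ q ∈ unravelOpt (u ρ) ρ, q.LL)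
    (hfresh : UFresh F u R) :
    ∀ s t : Term α, s.overSig F → t.overSig F →
      RedStar (UoptSys u R) s t → RedStar R s t := by
  intro s t hs ht hst
  obtain ⟨v, hsv, htv⟩ :=
    simulatedStep_of_redStar hsig hdet hLL hfresh hst s (Good.refl hs)
  exact hsv.trans (htv.redStar_of_overSig hfresh.1 ht)

/-- The optimized unraveling `U_opt` is sound for every `U_opt`-LL
3-eDCTRS `R` over a signature `F` that is non-LV or non-RV: for all terms
`s, t ∈ T(F,V)`, `s →*_{U_opt(R)} t` implies `s →*_R t`. -/
theorem uopt_sound_of_ultraLL_type3 {α : Type u} (F : Set α) (R : Set (ERule α))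
    (u : ERule α → ℕ → α)
    (hsig : ∀ ρ ∈ R, ρ.overSig F)
    (hdet : ∀ ρ ∈ R, ρ.Det ∧ ρ.Type3)
    (hLL : ∀ ρ ∈ R, ∀ q ∈ unravelOpt (u ρ) ρ, q.LL)
    (hfresh : UFresh F u R)
    (hnv : (∀ ρ ∈ R, ρ.nonLV) ∨ (∀ ρ ∈ R, ρ.nonRV)) :
    ∀ s t : Term α, s.overSig F → t.overSig F →
      RedStar (UoptSys u R) s t → RedStar R s t :=
  uopt_sound_of_ultraLL_type3_general F R u hsig hdet hLL hfresh
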